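/- arXiv:2209.00515 — 5 statements merged into one kernel-verified Lean document; each statement's English description precedes it below -/
import Mathlib

section
/- If F is a probability measure on ℝ with finite first moment and positive mean m, then T(F) = 0 if and only if F is the Dirac measure at m, i.e., f̂(ξ) = e^{-imξ} for all ξ. -/
/-!
Up to the reflection `ξ ↦ -ξ`, `ft μ` is the characteristic function of `μ`, so a finite first
moment makes it differentiable with derivative `ft' μ`, and `ft' μ 0 = -i m`. The function
`ξ ↦ ‖ft μ ξ - ft' μ ξ / ft' μ 0‖` is bounded, so `T(F) = 0` forces it to vanish identically:
`ft μ` solves `y' = -i m y`, `y 0 = 1`, hence `ft μ ξ = e^{-imξ} = ft (δ_m) ξ`, and characteristic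
functions determine measures. Conversely the quotient is exact for `δ_m` since `m ≠ 0`.
-/

open MeasureTheory Complex

/-- Fourier transform `f̂(ξ) = ∫ e^{-iξx} dF(x)` of a measure on `ℝ`. -/
noncomputable def ft (μ : Measure ℝ) (ξ : ℝ) : ℂ :=
  ∫ x, Complex.exp (-(Complex.I * ξ * x)) ∂μ

/-- Derivative of the Fourier transform: `f̂'(ξ) = -i ∫ x e^{-iξx} dF(x)`. -/
noncomputable def ft' (μ : Measure ℝ) (ξ : ℝ) : ℂ :=
  ∫ x, -(Complex.I * x) * Complex.exp (-(Complex.I * ξ * x)) ∂μ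

/-- The Fourier-based inequality index `T(F) = (1/2) sup_ξ |f̂(ξ) - f̂'(ξ)/f̂'(0)|`. -/
noncomputable def Tindex (μ : Measure ℝ) : ℝ :=
  (1 / 2) * ⨆ ξ : ℝ, ‖ft μ ξ - ft' μ ξ / ft' μ 0‖

section FourierTransform

variable {μ : Measure ℝ}

lemma ft_eq_charFun (μ : Measure ℝ) (ξ : ℝ) : ft μ ξ = charFun μ (-ξ) := by
  rw [ft, charFun_apply_real]
  congr with x
  push_cast
  ring_nf

theorem MeasureTheory.Measure.ext_of_ft {ν : Measure ℝ} [IsFiniteMeasure μ] [IsFiniteMeasure ν]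
    (h : ft μ = ft ν) : μ = ν :=
  Measure.ext_of_charFun <| funext fun t => by
    simpa only [ft_eq_charFun, neg_neg] using congrFun h (-t)

lemma ft_zero [IsProbabilityMeasure μ] : ft μ 0 = 1 := by
  simp [ft]

lemma ft'_zero : ft' μ 0 = -(I * ∫ x, x ∂μ) := by
  simp only [ft', ofReal_zero, mul_zero, zero_mul, neg_zero, exp_zero, mul_one, integral_neg,
    integral_const_mul]
  exact congrArg _ (congrArg _ integral_ofReal)

lemma ft_dirac (m ξ : ℝ) : ft (Measure.dirac m) ξ = exp (-(I * ξ * m)) := by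
  rw [ft, integral_dirac]

lemma ft'_dirac (m ξ : ℝ) : ft' (Measure.dirac m) ξ = -(I * m) * exp (-(I * ξ * m)) := by
  rw [ft', integral_dirac]

lemma hasDerivAt_ft [IsFiniteMeasure μ] (hint : Integrable (fun x : ℝ => x) μ) (ξ : ℝ) :
    HasDerivAt (ft μ) (ft' μ ξ) ξ := by
  have hmem : MemLp id (1 : ℕ) μ := by rw [Nat.cast_one, memLp_one_iff_integrable]; exact hint
  have hderiv : deriv (charFun μ) (-ξ) = I * ∫ x, x * exp (-ξ * x * I) ∂μ := by
    simpa using iteratedDeriv_charFun (t := -ξ) hmem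
  have hchain := (((contDiff_charFun hmem).differentiable one_ne_zero) (-ξ)).hasDerivAt.scomp ξ
    (hasDerivAt_neg ξ)
  rw [show ft μ = charFun μ ∘ Neg.neg from funext (ft_eq_charFun μ)]
  refine hchain.congr_deriv ?_
  rw [hderiv, ft', neg_one_smul, ← integral_const_mul, ← integral_neg]
  congr with x
  ring_nf

lemma norm_ft'_le (ξ : ℝ) : ‖ft' μ ξ‖ ≤ ∫ x, |x| ∂μ := by
  refine (norm_integral_le_integral_norm _).trans_eq ?_
  congr with x
  simp [Complex.norm_exp]

end FourierTransform

lemma eq_mul_exp_of_hasDerivAt {f : ℝ → ℂ} {c : ℂ} (hf : ∀ t, HasDerivAt f (c * f t) t) (t : ℝ) :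
    f t = f 0 * exp (c * t) := by
  have hg : ∀ s : ℝ, HasDerivAt (fun s : ℝ => f s * exp (-c * s)) 0 s := by
    intro s
    refine ((hf s).mul ((hasDerivAt_id s).ofReal_comp.const_mul (-c)).cexp).congr_deriv ?_
    simp only [id, ofReal_one]
    ring
  have hconst := is_const_of_deriv_eq_zero (fun s => (hg s).differentiableAt)
    (fun s => (hg s).deriv) t 0
  calc f t = f t * exp (-c * t) * exp (c * t) := by rw [mul_assoc, ← exp_add]; simp
    _ = f 0 * exp (c * t) := by rw [hconst]; simp

section Tindex

variable {μ : Measure ℝ}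

lemma Tindex_dirac {m : ℝ} (hm : m ≠ 0) : Tindex (Measure.dirac m) = 0 := by
  have h (ξ : ℝ) :
      ft (Measure.dirac m) ξ - ft' (Measure.dirac m) ξ / ft' (Measure.dirac m) 0 = 0 := by
    rw [ft_dirac, ft'_dirac, ft'_dirac, ofReal_zero, mul_zero, zero_mul, neg_zero, exp_zero,
      mul_one, mul_div_cancel_left₀ _ (by simp [hm]), sub_self]
  simp [Tindex, h]

-- Without this bound the real `⨆` in `Tindex` would take the junk value `0`.
lemma bddAbove_range_norm_ft_sub [IsProbabilityMeasure μ] :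
    BddAbove (Set.range fun ξ => ‖ft μ ξ - ft' μ ξ / ft' μ 0‖) := by
  refine ⟨1 + (∫ x, |x| ∂μ) / ‖ft' μ 0‖, ?_⟩
  rintro _ ⟨ξ, rfl⟩
  calc _ ≤ ‖ft μ ξ‖ + ‖ft' μ ξ / ft' μ 0‖ := norm_sub_le _ _
    _ ≤ _ := by
      rw [norm_div]
      gcongr
      · rw [ft_eq_charFun]; exact norm_charFun_le_one _
      · exact norm_ft'_le ξ

lemma ft_eq_div_of_Tindex_eq_zero [IsProbabilityMeasure μ] (hT : Tindex μ = 0) (ξ : ℝ) :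
    ft μ ξ = ft' μ ξ / ft' μ 0 := by
  have hsup : ⨆ ξ, ‖ft μ ξ - ft' μ ξ / ft' μ 0‖ = 0 := by simpa [Tindex] using hT
  exact sub_eq_zero.1 <| norm_le_zero_iff.1 <| (le_ciSup bddAbove_range_norm_ft_sub ξ).trans hsup.le

lemma hasDerivAt_ft_of_Tindex_eq_zero [IsProbabilityMeasure μ]
    (hint : Integrable (fun x : ℝ => x) μ) (hT : Tindex μ = 0) (h0 : ft' μ 0 ≠ 0) (ξ : ℝ) :
    HasDerivAt (ft μ) (ft' μ 0 * ft μ ξ) ξ := by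
  rw [ft_eq_div_of_Tindex_eq_zero hT ξ, mul_div_cancel₀ _ h0]
  exact hasDerivAt_ft hint ξ

end Tindex

theorem stmt_1 (μ : Measure ℝ) [IsProbabilityMeasure μ]
    (hint : Integrable (fun x : ℝ => x) μ)
    (m : ℝ) (hm : m = ∫ x, x ∂μ) (hmpos : 0 < m) :
    Tindex μ = 0 ↔ μ = Measure.dirac m := by
  have hft'0 : ft' μ 0 = -(I * m) := by rw [ft'_zero, hm]
  have hne : ft' μ 0 ≠ 0 := by simp [hft'0, hmpos.ne']
  constructor
  · intro hT
    refine Measure.ext_of_ft (funext fun ξ => ?_)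
    rw [eq_mul_exp_of_hasDerivAt (hasDerivAt_ft_of_Tindex_eq_zero hint hT hne) ξ, ft_zero,
      one_mul, hft'0, ft_dirac]
    congr 1
    ring
  · rintro rfl
    exact Tindex_dirac hmpos.ne'
end

section
/- If Y is a random variable taking two values 0 < α < β with P(Y=α) = 1-p, P(Y=β) = p, 0 < p < 1, then T(Y) = (β-α)p(1-p)/(α(1-p) + βp). -/
open MeasureTheory Complex

/-!
Both `ft` and `ft'` of the two-point law are two-term sums of the phases `e^{-iξα}`, `e^{-iξβ}`,
and `ft' 0 = -i m` with `m = α(1-p) + βp` the mean. Hence `ft ξ - ft' ξ / ft' 0` collapses to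
`c (e^{-iξα} - e^{-iξβ})` with `c = (β-α)p(1-p)/m`. The difference of two unit phases has modulus
at most `2`, with equality at `ξ = π / (β - α)`, so the supremum is `2c`.
-/

theorem integral_ofReal_smul_dirac_add_ofReal_smul_dirac {X E : Type*} [MeasurableSpace X]
    [MeasurableSingletonClass X] [NormedAddCommGroup E] [NormedSpace ℝ E] [CompleteSpace E]
    {a b : ℝ} (ha : 0 ≤ a) (hb : 0 ≤ b) (f : X → E) (x y : X) :
    ∫ z, f z ∂(ENNReal.ofReal a • Measure.dirac x + ENNReal.ofReal b • Measure.dirac y) =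
      a • f x + b • f y := by
  have hint : ∀ w : X, ∀ c : ℝ, Integrable f (ENNReal.ofReal c • Measure.dirac w) := fun w c ↦
    (integrable_dirac enorm_lt_top).smul_measure ENNReal.ofReal_ne_top
  rw [integral_add_measure (hint x a) (hint y b), integral_smul_measure, integral_smul_measure,
    integral_dirac, integral_dirac, ENNReal.toReal_ofReal ha, ENNReal.toReal_ofReal hb]

noncomputable def twoPointLaw (p α β : ℝ) : Measure ℝ :=
  ENNReal.ofReal (1 - p) • Measure.dirac α + ENNReal.ofReal p • Measure.dirac β

section TwoPointLaw

variable {p α β : ℝ}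

theorem ft_twoPointLaw (hp0 : 0 ≤ p) (hp1 : p ≤ 1) (ξ : ℝ) :
    ft (twoPointLaw p α β) ξ =
      (1 - p) * exp (-(I * ξ * α)) + p * exp (-(I * ξ * β)) := by
  simp only [ft, twoPointLaw,
    integral_ofReal_smul_dirac_add_ofReal_smul_dirac (sub_nonneg.2 hp1) hp0, real_smul]
  push_cast
  ring

theorem ft'_twoPointLaw (hp0 : 0 ≤ p) (hp1 : p ≤ 1) (ξ : ℝ) :
    ft' (twoPointLaw p α β) ξ =
      -I * ((1 - p) * α * exp (-(I * ξ * α)) + p * β * exp (-(I * ξ * β))) := by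
  simp only [ft', twoPointLaw,
    integral_ofReal_smul_dirac_add_ofReal_smul_dirac (sub_nonneg.2 hp1) hp0, real_smul]
  push_cast
  ring

end TwoPointLaw

theorem norm_exp_neg_I_mul_mul (ξ x : ℝ) : ‖exp (-(I * ξ * x))‖ = 1 := by
  rw [show -(I * ξ * x) = ((-(ξ * x) : ℝ) : ℂ) * I by push_cast; ring]
  exact norm_exp_ofReal_mul_I _

theorem iSup_norm_exp_sub_exp {α β : ℝ} (hαβ : α ≠ β) :
    ⨆ ξ : ℝ, ‖exp (-(I * ξ * α)) - exp (-(I * ξ * β))‖ = 2 := by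
  have hle : ∀ ξ : ℝ, ‖exp (-(I * ξ * α)) - exp (-(I * ξ * β))‖ ≤ 2 := fun ξ ↦
    (norm_sub_le _ _).trans_eq (by rw [norm_exp_neg_I_mul_mul, norm_exp_neg_I_mul_mul]; norm_num)
  refine le_antisymm (ciSup_le hle) ?_
  set ξ₀ := Real.pi / (β - α)
  have hphase : -(I * ξ₀ * β) = -(I * ξ₀ * α) - Real.pi * I := by
    have : (ξ₀ : ℂ) * (β - α) = Real.pi := by
      exact_mod_cast div_mul_cancel₀ Real.pi (sub_ne_zero.2 hαβ.symm)
    linear_combination (-I) * this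
  have hval : ‖exp (-(I * ξ₀ * α)) - exp (-(I * ξ₀ * β))‖ = 2 := by
    rw [hphase, exp_sub, exp_pi_mul_I, div_neg, div_one, sub_neg_eq_add, ← two_mul, norm_mul,
      norm_exp_neg_I_mul_mul]
    norm_num
  exact hval ▸ le_ciSup ⟨2, Set.forall_mem_range.2 hle⟩ ξ₀

theorem ft_sub_ft'_div_twoPointLaw {p α β : ℝ} (hp0 : 0 ≤ p) (hp1 : p ≤ 1)
    (hm : α * (1 - p) + β * p ≠ 0) (ξ : ℝ) :
    ft (twoPointLaw p α β) ξ - ft' (twoPointLaw p α β) ξ / ft' (twoPointLaw p α β) 0 =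
      ((β - α) * p * (1 - p) / (α * (1 - p) + β * p) : ℝ) *
        (exp (-(I * ξ * α)) - exp (-(I * ξ * β))) := by
  have hmC : (1 - p : ℂ) * α + p * β ≠ 0 := by
    exact_mod_cast (show α * (1 - p) + β * p = (1 - p) * α + p * β by ring) ▸ hm
  rw [ft_twoPointLaw hp0 hp1, ft'_twoPointLaw hp0 hp1, ft'_twoPointLaw hp0 hp1]
  simp only [ofReal_zero, mul_zero, zero_mul, neg_zero, exp_zero, mul_one]
  push_cast
  field_simp
  ring

theorem stmt_7 (p α β : ℝ) (hp : p ∈ Set.Ioo (0 : ℝ) 1)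
    (hα : 0 < α) (hαβ : α < β) :
    Tindex (ENNReal.ofReal (1 - p) • Measure.dirac α
      + ENNReal.ofReal p • Measure.dirac β)
      = (β - α) * p * (1 - p) / (α * (1 - p) + β * p) := by
  obtain ⟨hp0, hp1⟩ := hp
  have hm : 0 < α * (1 - p) + β * p := by nlinarith
  have hc : 0 ≤ (β - α) * p * (1 - p) / (α * (1 - p) + β * p) := by
    have : 0 ≤ β - α := by linarith
    have : 0 ≤ 1 - p := by linarith
    positivity
  change Tindex (twoPointLaw p α β) = _
  simp only [Tindex, ft_sub_ft'_div_twoPointLaw hp0.le hp1.le hm.ne', norm_mul, norm_real,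
    Real.norm_of_nonneg hc, ← Real.mul_iSup_of_nonneg hc, iSup_norm_exp_sub_exp hαβ.ne]
  ring
end

section
/- For a Gamma distribution with shape k > 0 and scale θ > 0, with Fourier transform f̂(ξ) = (1 + iθξ)^{-k}, one has T(F) = (1/(2√k)) (1 + 1/k)^{-(k+1)/2}. -/
/-!
The Fourier transform of the gamma law of shape `a` and rate `r` is obtained by analytic
continuation of its moment generating function `(1 - t / r) ^ (-a)` from real `t < r` to the
half-plane `re z < r`. Multiplying the gamma density of shape `a` by `x` gives `a / r` times the
density of shape `a + 1`, so `f̂'(ξ) / f̂'(0)` is the Fourier transform of the gamma law of shape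
`k + 1`. Hence, with `u = θξ` and `w = 1 + iu`, the quantity under the supremum is
`|w ^ (-k) - w ^ (-(k + 1))| = |w - 1| |w| ^ (-(k + 1)) = |u| (1 + u²) ^ (-(k + 1) / 2)`,
and Bernoulli's inequality shows that it is maximal at `u = 1 / √k`.
-/

open MeasureTheory Complex

open ProbabilityTheory Set Filter Topology

namespace ProbabilityTheory

variable {a r : ℝ}

lemma integral_gammaMeasure {E : Type*} [NormedAddCommGroup E] [NormedSpace ℝ E]
    (ha : 0 < a) (hr : 0 < r) (g : ℝ → E) :
    ∫ x, g x ∂gammaMeasure a r = ∫ x, gammaPDFReal a r x • g x := by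
  rw [gammaMeasure, integral_withDensity_eq_integral_toReal_smul (f := gammaPDF a r)
    (measurable_gammaPDFReal a r).ennreal_ofReal (ae_of_all _ fun _ ↦ ENNReal.ofReal_lt_top)]
  simp only [gammaPDF, ENNReal.toReal_ofReal (gammaPDFReal_nonneg ha hr _)]

lemma mul_gammaPDFReal (ha : 0 < a) (hr : r ≠ 0) (x : ℝ) :
    x * gammaPDFReal a r x = a / r * gammaPDFReal (a + 1) r x := by
  unfold gammaPDFReal
  split_ifs with hx
  · have hxa : x ^ a = x ^ (a - 1) * x := by
      rw [← Real.rpow_add_one' hx (by linarith), sub_add_cancel]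
    rw [add_sub_cancel_right, hxa, Real.rpow_add_one hr, Real.Gamma_add_one ha.ne']
    field_simp
  · simp

lemma mgf_id_gammaMeasure (ha : 0 < a) (hr : 0 < r) {t : ℝ} (ht : t < r) :
    mgf id (gammaMeasure a r) t = (1 - t / r) ^ (-a) := by
  have hrt : 0 < r - t := sub_pos.mpr ht
  rw [mgf, integral_gammaMeasure ha hr, ← setIntegral_eq_integral_of_forall_compl_eq_zero
    (s := Ici 0) fun x (hx : ¬ 0 ≤ x) ↦ by simp [gammaPDFReal, hx],
    integral_Ici_eq_integral_Ioi]
  calc ∫ x in Ioi 0, gammaPDFReal a r x • Real.exp (t * id x)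
      = ∫ x in Ioi 0, r ^ a / Real.Gamma a * (x ^ (a - 1) * Real.exp (-((r - t) * x))) := by
        refine setIntegral_congr_fun measurableSet_Ioi fun x (hx : 0 < x) ↦ ?_
        rw [gammaPDFReal, if_pos hx.le, smul_eq_mul, id, mul_assoc, mul_assoc, ← Real.exp_add]
        ring_nf
    _ = (1 - t / r) ^ (-a) := by
        rw [integral_const_mul, Real.integral_rpow_mul_exp_neg_mul_Ioi ha hrt,
          show 1 - t / r = (r - t) / r by field_simp, Real.rpow_neg (by positivity),
          Real.div_rpow hrt.le hr.le, Real.div_rpow zero_le_one hrt.le, Real.one_rpow]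
        field_simp

lemma Iio_subset_integrableExpSet_gammaMeasure (ha : 0 < a) (hr : 0 < r) :
    Iio r ⊆ integrableExpSet id (gammaMeasure a r) := by
  intro t (ht : t < r)
  -- the integral of a non-integrable function is junk `0`, whereas the formula is positive
  by_contra h
  have hmgf := mgf_id_gammaMeasure ha hr ht
  rw [mgf, integral_undef h] at hmgf
  have : 0 < 1 - t / r := by rw [sub_pos, div_lt_one hr]; exact ht
  exact (Real.rpow_pos_of_pos this (-a)).ne hmgf

lemma complexMGF_id_gammaMeasure (ha : 0 < a) (hr : 0 < r) {z : ℂ} (hz : z.re < r) :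
    complexMGF id (gammaMeasure a r) z = (1 - z / r) ^ (-(a : ℂ)) := by
  set U : Set ℂ := {z | z.re < r}
  have hslit : ∀ z ∈ U, 1 - z / r ∈ slitPlane := fun z (hz : z.re < r) ↦ by
    rw [mem_slitPlane_iff, sub_re, one_re, div_ofReal_re, sub_pos, div_lt_one hr]
    exact Or.inl hz
  have hF : AnalyticOnNhd ℂ (complexMGF id (gammaMeasure a r)) U :=
    analyticOnNhd_complexMGF.mono fun z (hz : z.re < r) ↦
      interior_mono (Iio_subset_integrableExpSet_gammaMeasure ha hr)
        ((isOpen_Iio (a := r)).interior_eq.symm ▸ hz)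
  have hG : AnalyticOnNhd ℂ (fun z : ℂ ↦ (1 - z / r) ^ (-(a : ℂ))) U :=
    (analyticOnNhd_const.sub (analyticOnNhd_id.div_const)).cpow analyticOnNhd_const hslit
  have hreal : ∀ t : ℝ, t < r →
      complexMGF id (gammaMeasure a r) t = (1 - t / r) ^ (-(a : ℂ)) := by
    intro t ht
    have : 0 < 1 - t / r := by rw [sub_pos, div_lt_one hr]; exact ht
    rw [complexMGF_ofReal, mgf_id_gammaMeasure ha hr ht, ofReal_cpow this.le]
    push_cast
    rfl
  have hofReal : Tendsto ((↑) : ℝ → ℂ) (𝓝[≠] 0) (𝓝[≠] 0) :=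
    tendsto_nhdsWithin_iff.mpr
      ⟨by simpa using (continuous_ofReal.tendsto 0).mono_left nhdsWithin_le_nhds,
        eventually_nhdsWithin_of_forall fun t ht ↦ ofReal_ne_zero.mpr ht⟩
  have hfreq : ∃ᶠ z in 𝓝[≠] (0 : ℂ),
      complexMGF id (gammaMeasure a r) z = (1 - z / r) ^ (-(a : ℂ)) :=
    hofReal.frequently ((eventually_nhdsWithin_of_eventually_nhds (eventually_lt_nhds hr)).mono
      hreal).frequently
  exact hF.eqOn_of_preconnected_of_frequently_eq hG
    (convex_halfSpace_re_lt r).isPreconnected (by simpa [U] using hr) hfreq hz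

end ProbabilityTheory

variable {a r : ℝ}

lemma ft_gammaMeasure (ha : 0 < a) (hr : 0 < r) (ξ : ℝ) :
    ft (gammaMeasure a r) ξ = (1 + ↑(ξ / r) * I) ^ (-(a : ℂ)) := by
  have h := complexMGF_id_gammaMeasure ha hr (z := -(I * ξ)) (by simpa using hr)
  rw [complexMGF] at h
  simp only [ft, id, neg_mul] at h ⊢
  rw [h]
  congr 1
  push_cast
  ring

lemma ft'_gammaMeasure (ha : 0 < a) (hr : 0 < r) (ξ : ℝ) :
    ft' (gammaMeasure a r) ξ = -I * (a / r) * ft (gammaMeasure (a + 1) r) ξ := by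
  rw [ft', ft, integral_gammaMeasure ha hr, integral_gammaMeasure (by linarith) hr,
    ← integral_const_mul]
  congr 1 with x
  have h := congrArg ((↑) : ℝ → ℂ) (mul_gammaPDFReal ha hr.ne' x)
  push_cast at h
  simp only [real_smul]
  linear_combination -I * cexp (-(I * ξ * x)) * h

lemma ft_sub_ft'_div_ft'_zero_gammaMeasure (ha : 0 < a) (hr : 0 < r) (ξ : ℝ) :
    ft (gammaMeasure a r) ξ - ft' (gammaMeasure a r) ξ / ft' (gammaMeasure a r) 0
      = (1 + ↑(ξ / r) * I) ^ (-(a : ℂ)) - (1 + ↑(ξ / r) * I) ^ (-(a + 1 : ℂ)) := by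
  have hc : -I * (a / r : ℂ) ≠ 0 :=
    mul_ne_zero (neg_ne_zero.2 I_ne_zero)
      (div_ne_zero (ofReal_ne_zero.2 ha.ne') (ofReal_ne_zero.2 hr.ne'))
  have hpos : 0 < a + 1 := by linarith
  rw [ft'_gammaMeasure ha hr, ft'_gammaMeasure ha hr, mul_div_mul_left _ _ hc,
    ft_gammaMeasure ha hr, ft_gammaMeasure hpos hr, ft_gammaMeasure hpos hr]
  simp

lemma norm_cpow_neg_sub_cpow_neg_add_one (a u : ℝ) :
    ‖(1 + u * I) ^ (-(a : ℂ)) - (1 + u * I) ^ (-(a + 1 : ℂ))‖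
      = |u| * (1 + u ^ 2) ^ (-(a + 1) / 2) := by
  have hw : (1 : ℂ) + u * I ≠ 0 := by
    intro h; simpa using congrArg re h
  have hsplit :
      (1 + u * I) ^ (-(a : ℂ)) = (1 + u * I) ^ (-(a + 1 : ℂ)) * (1 + u * I) ^ (1 : ℂ) := by
    rw [← cpow_add _ _ hw, show -(a + 1 : ℂ) + 1 = -a by ring]
  have hnorm : ‖(1 + u * I) ^ (-(a + 1 : ℂ))‖ = (1 + u ^ 2) ^ (-(a + 1) / 2) := by
    rw [show -(a + 1 : ℂ) = ((-(a + 1) : ℝ) : ℂ) by push_cast; ring, norm_cpow_real,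
      show (1 : ℂ) = ((1 : ℝ) : ℂ) by simp, norm_add_mul_I, one_pow, Real.sqrt_eq_rpow,
      ← Real.rpow_mul (by positivity)]
    ring_nf
  rw [hsplit, cpow_one, ← mul_sub_one, add_sub_cancel_left, norm_mul, hnorm, norm_mul, norm_I,
    mul_one, norm_real, Real.norm_eq_abs, mul_comm]

section Supremum

variable {k : ℝ}

lemma abs_mul_one_add_sq_rpow_le (hk : 0 < k) (u : ℝ) :
    |u| * (1 + u ^ 2) ^ (-(k + 1) / 2) ≤ 1 / √k * (1 + 1 / k) ^ (-(k + 1) / 2) := by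
  have hA : 0 < 1 + u ^ 2 := by positivity
  have hB : 0 < 1 + 1 / k := by positivity
  have hbern : k * u ^ 2 ≤ ((1 + u ^ 2) / (1 + 1 / k)) ^ (k + 1) := by
    have h := one_add_mul_self_le_rpow_one_add (s := (1 + u ^ 2) / (1 + 1 / k) - 1)
      (by linarith [div_pos hA hB]) (p := k + 1) (by linarith)
    rw [add_sub_cancel] at h
    refine le_trans (le_of_eq ?_) h
    field_simp
    ring
  have hsq : ∀ {x : ℝ}, 0 < x → (x ^ (-(k + 1) / 2)) ^ 2 = (x ^ (k + 1))⁻¹ := fun hx ↦ by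
    rw [← Real.rpow_natCast, ← Real.rpow_mul hx.le, ← Real.rpow_neg hx.le]
    ring_nf
  rw [← pow_le_pow_iff_left₀ (by positivity) (by positivity) two_ne_zero, mul_pow, mul_pow,
    hsq hA, hsq hB, sq_abs, div_pow, one_pow, Real.sq_sqrt hk.le]
  rw [Real.div_rpow hA.le hB.le, le_div_iff₀ (by positivity)] at hbern
  have hP : 0 < (1 + u ^ 2) ^ (k + 1) := by positivity
  have hQ : 0 < (1 + 1 / k) ^ (k + 1) := by positivity
  generalize (1 + u ^ 2) ^ (k + 1) = P at *
  generalize (1 + 1 / k) ^ (k + 1) = Q at *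
  calc u ^ 2 * P⁻¹ = k * u ^ 2 * Q / (k * Q * P) := by field_simp
    _ ≤ P / (k * Q * P) := by gcongr
    _ = 1 / k * Q⁻¹ := by field_simp

lemma abs_mul_one_add_sq_rpow_at_inv_sqrt (hk : 0 < k) :
    |1 / √k| * (1 + (1 / √k) ^ 2) ^ (-(k + 1) / 2)
      = 1 / √k * (1 + 1 / k) ^ (-(k + 1) / 2) := by
  rw [abs_of_pos (by positivity), div_pow, one_pow, Real.sq_sqrt hk.le]

lemma iSup_abs_mul_one_add_sq_rpow (hk : 0 < k) :
    ⨆ u : ℝ, |u| * (1 + u ^ 2) ^ (-(k + 1) / 2) = 1 / √k * (1 + 1 / k) ^ (-(k + 1) / 2) :=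
  IsGreatest.csSup_eq ⟨⟨1 / √k, abs_mul_one_add_sq_rpow_at_inv_sqrt hk⟩,
    forall_mem_range.2 (abs_mul_one_add_sq_rpow_le hk)⟩

end Supremum

theorem stmt_15 (k θ : ℝ) (hk : 0 < k) (hθ : 0 < θ) :
    Tindex (ProbabilityTheory.gammaMeasure k (1 / θ))
      = 1 / (2 * Real.sqrt k) * (1 + 1 / k) ^ (-(k + 1) / 2) := by
  have hterm : ∀ ξ : ℝ, ‖ft (gammaMeasure k (1 / θ)) ξ
      - ft' (gammaMeasure k (1 / θ)) ξ / ft' (gammaMeasure k (1 / θ)) 0‖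
      = |θ * ξ| * (1 + (θ * ξ) ^ 2) ^ (-(k + 1) / 2) := fun ξ ↦ by
    rw [ft_sub_ft'_div_ft'_zero_gammaMeasure hk (by positivity), div_div_eq_mul_div, div_one,
      mul_comm ξ, norm_cpow_neg_sub_cpow_neg_add_one]
  have hsurj : Function.Surjective (θ * ·) := fun u ↦ ⟨u / θ, mul_div_cancel₀ u hθ.ne'⟩
  rw [Tindex, iSup_congr hterm,
    hsurj.iSup_comp (fun u ↦ |u| * (1 + u ^ 2) ^ (-(k + 1) / 2)),
    iSup_abs_mul_one_add_sq_rpow hk]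
  ring
end

section
/- Let F be the CDF of a probability measure on [0,∞) with mean m > 0 and finite first moment, and define H(F) = (1/m)∫₀^∞ (F(x) - F_m(x))² dx, where F_m is the Heaviside step at m. Then 0 ≤ H(F) < 1. -/
open MeasureTheory Complex

/-!
Write `G = 1 - F` for the tail and `q = F m`. Pointwise, `F² ≤ q F` on `(0, m)` because
`0 ≤ F ≤ q` there, and `(F - 1)² = G² ≤ (1 - q) G` on `[m, ∞)` because `0 ≤ G ≤ 1 - q` there.
The layer-cake formula `m = ∫₀^∞ G` shows that `c := ∫₀^m F` equals `∫_m^∞ G`, so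
`m H(F) ≤ q c + (1 - q) c = c`. Finally `c < m`: if `q < 1` then `c ≤ m q`, and if `q = 1`
then `G` vanishes on `[m, ∞)`, so `c = 0`.
-/

open Set ProbabilityTheory

lemma MeasureTheory.IntegrableOn.of_one_sub {α : Type*} [MeasurableSpace α] {μ : Measure α}
    {F : α → ℝ} {s : Set α} (hF : IntegrableOn (fun x => 1 - F x) s μ) (hs : μ s ≠ ⊤) :
    IntegrableOn F s μ := by
  convert (integrableOn_const hs (C := (1 : ℝ))).sub hF using 1
  ext x
  exact (sub_sub_cancel 1 (F x)).symm

section PiecewiseOnIoi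

variable {f g : ℝ → ℝ} {m : ℝ}

lemma integrableOn_Ioi_ite_lt (hm : 0 < m) (hf : IntegrableOn f (Ioo 0 m))
    (hg : IntegrableOn g (Ici m)) :
    IntegrableOn (fun x => if x < m then f x else g x) (Ioi 0) := by
  rw [← Ioo_union_Ici_eq_Ioi hm, integrableOn_union]
  exact ⟨hf.congr_fun (fun x hx => (if_pos hx.2).symm) measurableSet_Ioo,
    hg.congr_fun (fun x hx => (if_neg (not_lt.2 hx)).symm) measurableSet_Ici⟩

lemma setIntegral_Ioi_ite_lt (hm : 0 < m) (hf : IntegrableOn f (Ioo 0 m))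
    (hg : IntegrableOn g (Ici m)) :
    ∫ x in Ioi 0, (if x < m then f x else g x) =
      (∫ x in Ioo 0 m, f x) + ∫ x in Ici m, g x := by
  have hfg := integrableOn_Ioi_ite_lt hm hf hg
  rw [← Ioo_union_Ici_eq_Ioi hm] at hfg ⊢
  rw [setIntegral_union ((Iio_disjoint_Ici le_rfl).mono_left Ioo_subset_Iio_self)
      measurableSet_Ici hfg.left_of_union hfg.right_of_union,
    setIntegral_congr_fun measurableSet_Ioo (fun x hx => if_pos hx.2),
    setIntegral_congr_fun measurableSet_Ici (fun x hx => if_neg (not_lt.2 hx))]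

end PiecewiseOnIoi

section StepDistance

variable {F : ℝ → ℝ} {m : ℝ}

lemma setIntegral_Ioo_eq_setIntegral_Ici_one_sub
    (hint : IntegrableOn (fun x => 1 - F x) (Ioi 0)) (hm : ∫ x in Ioi 0, (1 - F x) = m)
    (hmpos : 0 < m) :
    ∫ x in Ioo 0 m, F x = ∫ x in Ici m, (1 - F x) := by
  have hIoo : IntegrableOn (fun x => 1 - F x) (Ioo 0 m) := hint.mono_set Ioo_subset_Ioi_self
  have hIci : IntegrableOn (fun x => 1 - F x) (Ici m) := hint.mono_set (Ici_subset_Ioi.2 hmpos)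
  have hsplit := setIntegral_Ioi_ite_lt hmpos hIoo hIci
  simp only [ite_self, hm] at hsplit
  have hone : IntegrableOn (fun _ => (1 : ℝ)) (Ioo 0 m) := integrableOn_const measure_Ioo_lt_top.ne
  rw [integral_sub hone (hIoo.of_one_sub measure_Ioo_lt_top.ne), setIntegral_const,
    Real.volume_real_Ioo_of_le hmpos.le] at hsplit
  simp only [sub_zero, smul_eq_mul, mul_one] at hsplit
  linarith

lemma sq_sub_step_le (hmono : Monotone F) (hnn : ∀ x, 0 ≤ F x) (hle : ∀ x, F x ≤ 1) (x : ℝ) :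
    (F x - if x < m then 0 else 1) ^ 2 ≤
      if x < m then F m * F x else (1 - F m) * (1 - F x) := by
  split_ifs with hx
  · nlinarith [hnn x, hmono hx.le]
  · nlinarith [hle x, hmono (not_lt.1 hx)]

lemma setIntegral_Ioo_lt (hmono : Monotone F) (hle : ∀ x, F x ≤ 1) (hmpos : 0 < m)
    (hint : IntegrableOn F (Ioo 0 m)) (hc : ∫ x in Ioo 0 m, F x = ∫ x in Ici m, (1 - F x)) :
    ∫ x in Ioo 0 m, F x < m := by
  rcases (hle m).lt_or_eq with hq | hq
  · calc ∫ x in Ioo 0 m, F x ≤ ∫ _ in Ioo 0 m, F m :=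
          setIntegral_mono_on hint (integrableOn_const measure_Ioo_lt_top.ne) measurableSet_Ioo
            fun x hx => hmono hx.2.le
      _ = m * F m := by
          rw [setIntegral_const, Real.volume_real_Ioo_of_le hmpos.le, sub_zero, smul_eq_mul]
      _ < m := mul_lt_of_lt_one_right hmpos hq
  · have hzero : ∫ x in Ici m, (1 - F x) = 0 :=
      setIntegral_eq_zero_of_forall_eq_zero fun x hx =>
        sub_eq_zero.2 (le_antisymm (hq ▸ hmono hx) (hle x))
    rw [hc, hzero]
    exact hmpos

theorem setIntegral_sq_sub_step_lt (hmono : Monotone F) (hnn : ∀ x, 0 ≤ F x)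
    (hle : ∀ x, F x ≤ 1) (hm : ∫ x in Ioi 0, (1 - F x) = m) (hmpos : 0 < m) :
    ∫ x in Ioi 0, (F x - if x < m then 0 else 1) ^ 2 < m := by
  have hint : IntegrableOn (fun x => 1 - F x) (Ioi 0) :=
    Integrable.of_integral_ne_zero (hm ▸ hmpos.ne')
  have hFint : IntegrableOn F (Ioo 0 m) :=
    (hint.mono_set Ioo_subset_Ioi_self).of_one_sub measure_Ioo_lt_top.ne
  have hGint : IntegrableOn (fun x => 1 - F x) (Ici m) := hint.mono_set (Ici_subset_Ioi.2 hmpos)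
  have hc := setIntegral_Ioo_eq_setIntegral_Ici_one_sub hint hm hmpos
  have hDint := integrableOn_Ioi_ite_lt hmpos (hFint.const_mul (F m)) (hGint.const_mul (1 - F m))
  calc ∫ x in Ioi 0, (F x - if x < m then 0 else 1) ^ 2
      ≤ ∫ x in Ioi 0, (if x < m then F m * F x else (1 - F m) * (1 - F x)) :=
        integral_mono_of_nonneg (.of_forall fun _ => sq_nonneg _) hDint
          (.of_forall (sq_sub_step_le hmono hnn hle))
    _ = ∫ x in Ioo 0 m, F x := by
        rw [setIntegral_Ioi_ite_lt hmpos (hFint.const_mul _) (hGint.const_mul _),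
          integral_const_mul, integral_const_mul, ← hc]
        ring
    _ < m := setIntegral_Ioo_lt hmono hle hmpos hFint hc

end StepDistance

lemma integral_id_eq_setIntegral_one_sub_cdf (μ : Measure ℝ) [IsProbabilityMeasure μ]
    (hsupp : μ (Iio 0) = 0) (hint : Integrable id μ) :
    ∫ x, x ∂μ = ∫ t in Ioi 0, (1 - cdf μ t) := by
  have hnn : 0 ≤ᵐ[μ] id := ae_iff.2 (by simp only [Pi.zero_apply, id, not_le]; exact hsupp)
  refine (hint.integral_eq_integral_meas_lt hnn).trans ?_
  congr! with t
  rw [cdf_eq_real, ← probReal_compl_eq_one_sub measurableSet_Iic, compl_Iic]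
  rfl

theorem stmt_18 (μ : Measure ℝ) [IsProbabilityMeasure μ]
    (hsupp : μ {x : ℝ | x < 0} = 0)
    (hint : Integrable (fun x : ℝ => x) μ)
    (m : ℝ) (hm : m = ∫ x, x ∂μ) (hmpos : 0 < m) :
    0 ≤ (1 / m) * ∫ x in Set.Ioi (0 : ℝ),
        ((μ (Set.Iic x)).toReal - if x < m then 0 else 1) ^ 2 ∧
      (1 / m) * (∫ x in Set.Ioi (0 : ℝ),
        ((μ (Set.Iic x)).toReal - if x < m then 0 else 1) ^ 2) < 1 := by
  have hcdf : ∀ x, (μ (Iic x)).toReal = cdf μ x := fun x => (cdf_eq_real μ x).symm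
  have hmean : ∫ t in Ioi 0, (1 - cdf μ t) = m :=
    (integral_id_eq_setIntegral_one_sub_cdf μ hsupp hint).symm.trans hm.symm
  simp only [hcdf]
  refine ⟨mul_nonneg (one_div_pos.2 hmpos).le (integral_nonneg fun _ => sq_nonneg _), ?_⟩
  rw [one_div_mul_eq_div, div_lt_one hmpos]
  exact setIntegral_sq_sub_step_lt (monotone_cdf μ) (cdf_nonneg μ) (cdf_le_one μ) hmean hmpos
end

section
/- For a probability measure F on [0,∞) with mean m > 0 and finite first moment, the Pietra index P(F) = ∫_m^∞ (1-F(x)) dx satisfies the identity P(F) = (1/2)[G(F) + H(F)], where G(F) = 1 - (1/m)∫₀^∞(1-F(x))² dx is the Gini index and H(F) = (1/m)∫₀^∞ (F(x)-F_m(x))² dx. -/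
/-! With the survival function `S = 1 - F`, the expansion of `(F - F_m)²` gives
`m H(F) = ∫₀^∞ S² + m - 2 ∫₀^m S`. The layer-cake formula `∫₀^∞ S = m` turns `∫₀^m S`
into `m - m P(F)`, and the Gini term `1 - (1/m) ∫₀^∞ S²` cancels the `∫₀^∞ S²`. -/

open MeasureTheory Complex

open Set

theorem MeasureTheory.Integrable.integrableOn_measureReal_lt {α : Type*} [MeasurableSpace α]
    {μ : Measure α} {f : α → ℝ} (hf : Integrable f μ) (f_nn : 0 ≤ᵐ[μ] f) :
    IntegrableOn (fun t => μ.real {a | t < f a}) (Ioi 0) := by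
  have h_anti : Antitone fun t => μ {a | t < f a} :=
    fun _ _ hst => measure_mono fun _ h => hst.trans_lt h
  have h_meas : Measurable fun t => μ.real {a | t < f a} := h_anti.measurable.ennreal_toReal
  refine ⟨h_meas.aestronglyMeasurable,
    (hasFiniteIntegral_iff_ofReal (ae_of_all _ fun _ => measureReal_nonneg)).2 ?_⟩
  calc ∫⁻ t in Ioi 0, ENNReal.ofReal (μ.real {a | t < f a})
      ≤ ∫⁻ t in Ioi 0, μ {a | t < f a} := lintegral_mono fun _ => ENNReal.ofReal_toReal_le
    _ = ∫⁻ a, ENNReal.ofReal (f a) ∂μ :=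
      (lintegral_eq_lintegral_meas_lt μ f_nn hf.aemeasurable).symm
    _ < ⊤ := hf.lintegral_lt_top

theorem sq_sub_ite_eq_sq_one_sub_add_indicator (F : ℝ → ℝ) (m x : ℝ) :
    (F x - if x < m then 0 else 1) ^ 2
      = (1 - F x) ^ 2 + (Iio m).indicator (fun x => 1 - 2 * (1 - F x)) x := by
  by_cases hx : x < m
  · rw [if_pos hx, indicator_of_mem (mem_Iio.2 hx)]; ring
  · rw [if_neg hx, indicator_of_notMem (mt mem_Iio.1 hx)]; ring

theorem integral_Ioi_sq_sub_ite {F : ℝ → ℝ} {a m : ℝ} (hm : a ≤ m)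
    (h1 : IntegrableOn (fun x => 1 - F x) (Ioi a))
    (h2 : IntegrableOn (fun x => (1 - F x) ^ 2) (Ioi a)) :
    ∫ x in Ioi a, (F x - if x < m then 0 else 1) ^ 2
      = (∫ x in Ioi a, (1 - F x) ^ 2) + (m - a) - 2 * ∫ x in a..m, (1 - F x) := by
  have h1' : IntegrableOn (fun x => 1 - F x) (Ioc a m) := h1.mono_set Ioc_subset_Ioi_self
  have hind : IntegrableOn (fun x => 1 - 2 * (1 - F x)) (Ioo a m) :=
    ((integrableOn_const measure_Ioc_lt_top.ne).sub (h1'.const_mul 2)).mono_set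
      Ioo_subset_Ioc_self
  simp_rw [sq_sub_ite_eq_sq_one_sub_add_indicator F m]
  rw [integral_add h2 ?_, setIntegral_indicator measurableSet_Iio, Ioi_inter_Iio,
    ← integral_Ioc_eq_integral_Ioo, ← intervalIntegral.integral_of_le hm,
    intervalIntegral.integral_sub, intervalIntegral.integral_const_mul,
    intervalIntegral.integral_const]
  · simp only [smul_eq_mul, mul_one]; ring
  · exact intervalIntegrable_const
  · exact (intervalIntegrable_iff_integrableOn_Ioc_of_le hm).2 (h1'.const_mul 2)
  · rw [integrable_indicator_iff measurableSet_Iio, IntegrableOn,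
      Measure.restrict_restrict measurableSet_Iio, Iio_inter_Ioi]
    exact hind

theorem stmt_19 (μ : Measure ℝ) [IsProbabilityMeasure μ]
    (hsupp : μ {x : ℝ | x < 0} = 0)
    (hint : Integrable (fun x : ℝ => x) μ)
    (m : ℝ) (hm : m = ∫ x, x ∂μ) (hmpos : 0 < m) :
    (1 / m) * ∫ x in Set.Ioi m, (1 - (μ (Set.Iic x)).toReal)
      = (1 / 2) * ((1 - (1 / m) * ∫ x in Set.Ioi (0 : ℝ), (1 - (μ (Set.Iic x)).toReal) ^ 2)
        + (1 / m) * ∫ x in Set.Ioi (0 : ℝ),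
            ((μ (Set.Iic x)).toReal - if x < m then 0 else 1) ^ 2) := by
  have h_nn : 0 ≤ᵐ[μ] fun x => x :=
    ae_iff.2 (by simpa only [Pi.zero_apply, not_le] using hsupp)
  have h_tail (x : ℝ) : 1 - (μ (Iic x)).toReal = μ.real {a | x < a} := by
    rw [← measureReal_def, ← probReal_compl_eq_one_sub measurableSet_Iic, compl_Iic]
    rfl
  have h_int : IntegrableOn (fun x => 1 - (μ (Iic x)).toReal) (Ioi 0) := by
    simpa only [h_tail] using hint.integrableOn_measureReal_lt h_nn
  have h_int_sq : IntegrableOn (fun x => (1 - (μ (Iic x)).toReal) ^ 2) (Ioi 0) := by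
    refine (h_int.bdd_mul h_int.aestronglyMeasurable (c := 1) (ae_of_all _ fun x => ?_)).congr
      (ae_of_all _ fun x => (sq _).symm)
    rw [h_tail, Real.norm_of_nonneg measureReal_nonneg]
    exact measureReal_le_one
  have h_mean : ∫ x in Ioi 0, (1 - (μ (Iic x)).toReal) = m := by
    simp only [h_tail, hm, hint.integral_eq_integral_meas_lt h_nn]
  rw [integral_Ioi_sq_sub_ite hmpos.le h_int h_int_sq,
    ← intervalIntegral.integral_Ioi_sub_Ioi h_int hmpos.le, h_mean]
  field_simp
  ring
end
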